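/- arXiv:2109.01300 — 2 statements merged into one kernel-verified Lean document; each statement's English description precedes it below -/
import Mathlib

section
/- Let C ≥ 1, n ≥ 1, fix a label y : Fin C and an input x ∈ ℝⁿ (EuclideanSpace ℝ (Fin n)). Define the linear-model cross-entropy loss L(W) = −log(softmax(i ↦ ⟨W_i, x⟩)_y) as a function of the weight vectors W : Fin C → ℝⁿ. Then L is twice differentiable, and at every W, for every perturbation δ : Fin C → ℝⁿ, writing ε_i = ⟨δ_i, x⟩ and p = softmax(i ↦ ⟨W_i, x⟩), the quadratic form of the second derivative satisfies (1/2)·D²L(W)[δ, δ] = (1/4) · ∑_{i,j} p_i p_j (ε_i − ε_j)². -/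
/-!
In logit coordinates the loss is `log ∑ₖ exp sₖ - s_y`, whose gradient is `softmax s - e_y` and
whose Hessian is `diag p - p pᵀ` with `p = softmax s`, because
`softmax s i = exp (s i - log ∑ₖ exp sₖ)`.
Its quadratic form is the variance `∑ pᵢ εᵢ² - (∑ pᵢ εᵢ)²` of `ε` under `p`, which equals
`½ ∑ᵢⱼ pᵢ pⱼ (εᵢ - εⱼ)²` since `∑ pᵢ = 1`. The logits depend linearly on the weights, so the second
derivative of the loss in `W` is that Hessian evaluated at `ε = (⟪δᵢ, x⟫)ᵢ`.
-/

open scoped RealInnerProductSpace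

/-- Softmax of a logit vector `s : Fin C → ℝ`. -/
noncomputable def softmax {C : ℕ} (s : Fin C → ℝ) (i : Fin C) : ℝ :=
  Real.exp (s i) / ∑ k, Real.exp (s k)

open Finset Real

theorem fderiv_fderiv_apply {𝕜 E F : Type*} [NontriviallyNormedField 𝕜]
    [NormedAddCommGroup E] [NormedSpace 𝕜 E] [NormedAddCommGroup F] [NormedSpace 𝕜 F]
    {f : E → F} {x : E} (hf : DifferentiableAt 𝕜 (fderiv 𝕜 f) x) (u v : E) :
    fderiv 𝕜 (fderiv 𝕜 f) x u v = fderiv 𝕜 (fun x' => fderiv 𝕜 f x' v) x u := by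
  rw [fderiv_clm_apply hf (differentiableAt_const v)]
  simp

theorem fderiv_fderiv_comp_continuousLinearMap {𝕜 E F G : Type*} [NontriviallyNormedField 𝕜]
    [NormedAddCommGroup E] [NormedSpace 𝕜 E] [NormedAddCommGroup F] [NormedSpace 𝕜 F]
    [NormedAddCommGroup G] [NormedSpace 𝕜 G]
    (g : E →L[𝕜] F) {f : F → G} (hf : ContDiff 𝕜 2 f) (x u v : E) :
    fderiv 𝕜 (fderiv 𝕜 (f ∘ g)) x u v = fderiv 𝕜 (fderiv 𝕜 f) (g x) (g u) (g v) := by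
  simpa [iteratedFDeriv_two_apply] using
    congrArg (fun m => m ![u, v]) (g.iteratedFDeriv_comp_right hf x le_rfl)

theorem sum_sum_mul_mul_sub_sq {ι R : Type*} [Fintype ι] [CommRing R] (p e : ι → R)
    (hp : ∑ i, p i = 1) :
    ∑ i, ∑ j, p i * p j * (e i - e j) ^ 2 =
      2 * (∑ i, p i * e i ^ 2 - (∑ i, p i * e i) ^ 2) := by
  have expand : ∀ i j, p i * p j * (e i - e j) ^ 2 =
      p i * e i ^ 2 * p j - 2 * (p i * e i) * (p j * e j) + p i * (p j * e j ^ 2) :=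
    fun i j => by ring
  simp only [expand, sum_add_distrib, sum_sub_distrib, ← mul_sum, ← sum_mul, hp]
  ring

noncomputable def crossEntropy {C : ℕ} (y : Fin C) (s : Fin C → ℝ) : ℝ :=
  -log (softmax s y)

section Softmax

variable {C : ℕ} [Nonempty (Fin C)]

theorem sum_exp_pos (s : Fin C → ℝ) : 0 < ∑ k, exp (s k) :=
  sum_pos (fun _ _ => exp_pos _) univ_nonempty

theorem sum_softmax (s : Fin C → ℝ) : ∑ i, softmax s i = 1 := by
  simp only [softmax, ← sum_div, div_self (sum_exp_pos s).ne']

theorem softmax_eq_exp_sub_log_sum_exp (s : Fin C → ℝ) (i : Fin C) :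
    softmax s i = exp (s i - log (∑ k, exp (s k))) := by
  rw [exp_sub, exp_log (sum_exp_pos s), softmax]

theorem hasFDerivAt_log_sum_exp (s : Fin C → ℝ) :
    HasFDerivAt (fun s : Fin C → ℝ => log (∑ k, exp (s k)))
      (∑ k, softmax s k • (ContinuousLinearMap.proj k : (Fin C → ℝ) →L[ℝ] ℝ)) s := by
  have hsum : HasFDerivAt (fun s : Fin C → ℝ => ∑ k, exp (s k))
      (∑ k, exp (s k) • (ContinuousLinearMap.proj k : (Fin C → ℝ) →L[ℝ] ℝ)) s :=
    HasFDerivAt.fun_sum fun k _ => (hasFDerivAt_apply k s).exp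
  refine (hsum.log (sum_exp_pos s).ne').congr_fderiv ?_
  simp only [smul_sum, smul_smul, inv_mul_eq_div, softmax]

theorem hasFDerivAt_softmax (s : Fin C → ℝ) (i : Fin C) :
    HasFDerivAt (fun s => softmax s i)
      (softmax s i • ((ContinuousLinearMap.proj i : (Fin C → ℝ) →L[ℝ] ℝ) -
        ∑ j, softmax s j • ContinuousLinearMap.proj j)) s := by
  rw [funext fun s' => softmax_eq_exp_sub_log_sum_exp s' i, softmax_eq_exp_sub_log_sum_exp]
  exact ((hasFDerivAt_apply i s).sub (hasFDerivAt_log_sum_exp s)).exp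

theorem crossEntropy_eq_log_sum_exp_sub (y : Fin C) (s : Fin C → ℝ) :
    crossEntropy y s = log (∑ k, exp (s k)) - s y := by
  rw [crossEntropy, softmax_eq_exp_sub_log_sum_exp, log_exp, neg_sub]

theorem contDiff_crossEntropy {n : WithTop ℕ∞} (y : Fin C) : ContDiff ℝ n (crossEntropy y) := by
  rw [funext (crossEntropy_eq_log_sum_exp_sub y)]
  exact ((ContDiff.sum fun k _ => (contDiff_apply ℝ ℝ k).exp).log
    fun s => (sum_exp_pos s).ne').sub (contDiff_apply ℝ ℝ y)

theorem hasFDerivAt_crossEntropy (y : Fin C) (s : Fin C → ℝ) :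
    HasFDerivAt (crossEntropy y)
      (∑ k, softmax s k • ContinuousLinearMap.proj k -
        (ContinuousLinearMap.proj y : (Fin C → ℝ) →L[ℝ] ℝ)) s := by
  rw [funext (crossEntropy_eq_log_sum_exp_sub y)]
  exact (hasFDerivAt_log_sum_exp s).sub (hasFDerivAt_apply y s)

theorem fderiv_crossEntropy_apply (y : Fin C) (s e : Fin C → ℝ) :
    fderiv ℝ (crossEntropy y) s e = ∑ k, softmax s k * e k - e y := by
  simp [(hasFDerivAt_crossEntropy y s).fderiv]

theorem fderiv_fderiv_crossEntropy_apply (y : Fin C) (s e : Fin C → ℝ) :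
    fderiv ℝ (fderiv ℝ (crossEntropy y)) s e e =
      ∑ k, softmax s k * e k ^ 2 - (∑ k, softmax s k * e k) ^ 2 := by
  have hgrad : HasFDerivAt (fun s' => fderiv ℝ (crossEntropy y) s' e)
      (∑ k, e k • softmax s k • ((ContinuousLinearMap.proj k : (Fin C → ℝ) →L[ℝ] ℝ) -
        ∑ j, softmax s j • ContinuousLinearMap.proj j)) s := by
    simp only [fderiv_crossEntropy_apply]
    exact (HasFDerivAt.fun_sum fun k _ => (hasFDerivAt_softmax s k).mul_const (e k)).sub_const _
  rw [fderiv_fderiv_apply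
    (((contDiff_crossEntropy y).fderiv_right (m := 1) le_rfl).differentiable one_ne_zero s),
    hgrad.fderiv]
  simp only [_root_.sum_apply, smul_apply, sub_apply, ContinuousLinearMap.proj_apply, smul_eq_mul]
  rw [sq (∑ k, softmax s k * e k), sum_mul, ← sum_sub_distrib]
  exact sum_congr rfl fun k _ => by ring

end Softmax


noncomputable def logits {C : ℕ} {E : Type*} [NormedAddCommGroup E] [InnerProductSpace ℝ E]
    (x : E) : (Fin C → E) →L[ℝ] (Fin C → ℝ) :=
  ContinuousLinearMap.pi fun i => (innerSL ℝ x).comp (ContinuousLinearMap.proj i)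

theorem logits_apply {C : ℕ} {E : Type*} [NormedAddCommGroup E] [InnerProductSpace ℝ E]
    (x : E) (W : Fin C → E) (i : Fin C) : logits x W i = ⟪W i, x⟫ :=
  real_inner_comm _ _

theorem linearModel_crossEntropy_second_derivative_general (C n : ℕ)
    (y : Fin C) (x : EuclideanSpace ℝ (Fin n)) :
    Differentiable ℝ (fun W : Fin C → EuclideanSpace ℝ (Fin n) =>
      -Real.log (softmax (fun i => ⟪W i, x⟫) y)) ∧
    Differentiable ℝ (fderiv ℝ (fun W : Fin C → EuclideanSpace ℝ (Fin n) =>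
      -Real.log (softmax (fun i => ⟪W i, x⟫) y))) ∧
    ∀ (W δ : Fin C → EuclideanSpace ℝ (Fin n)),
      (1 / 2) *
          fderiv ℝ (fderiv ℝ (fun W : Fin C → EuclideanSpace ℝ (Fin n) =>
            -Real.log (softmax (fun i => ⟪W i, x⟫) y))) W δ δ =
        (1 / 4) * ∑ i, ∑ j,
          softmax (fun k => ⟪W k, x⟫) i * softmax (fun k => ⟪W k, x⟫) j *
            (⟪δ i, x⟫ - ⟪δ j, x⟫) ^ 2 := by
  have : Nonempty (Fin C) := ⟨y⟩
  have hlogits (V : Fin C → EuclideanSpace ℝ (Fin n)) : logits x V = fun i => ⟪V i, x⟫ :=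
    funext (logits_apply x V)
  have hloss : (fun W : Fin C → EuclideanSpace ℝ (Fin n) =>
      -Real.log (softmax (fun i => ⟪W i, x⟫) y)) = crossEntropy y ∘ logits x := by
    funext W
    rw [Function.comp_apply, hlogits, crossEntropy]
  have hsmooth : ContDiff ℝ 2 (crossEntropy y ∘ logits x) :=
    (contDiff_crossEntropy y).comp (logits x).contDiff
  rw [hloss]
  refine ⟨hsmooth.differentiable two_ne_zero,
    (hsmooth.fderiv_right (m := 1) le_rfl).differentiable one_ne_zero, fun W δ => ?_⟩
  rw [fderiv_fderiv_comp_continuousLinearMap _ (contDiff_crossEntropy y),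
    fderiv_fderiv_crossEntropy_apply, sum_sum_mul_mul_sub_sq _ _ (sum_softmax _)]
  simp only [hlogits]
  ring

/-- For the linear-model cross-entropy loss `L(W) = -log (softmax (i ↦ ⟪W i, x⟫) y)`,
`L` is twice differentiable and, at every `W` and every perturbation `δ`, writing
`ε i = ⟪δ i, x⟫` and `p = softmax (i ↦ ⟪W i, x⟫)`, the quadratic form of the second
derivative satisfies `(1/2) * D²L(W)[δ, δ] = (1/4) * ∑ i, ∑ j, p i * p j * (ε i - ε j)^2`. -/
theorem linearModel_crossEntropy_second_derivative (C n : ℕ) (hC : 1 ≤ C) (hn : 1 ≤ n)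
    (y : Fin C) (x : EuclideanSpace ℝ (Fin n)) :
    Differentiable ℝ (fun W : Fin C → EuclideanSpace ℝ (Fin n) =>
      -Real.log (softmax (fun i => ⟪W i, x⟫) y)) ∧
    Differentiable ℝ (fderiv ℝ (fun W : Fin C → EuclideanSpace ℝ (Fin n) =>
      -Real.log (softmax (fun i => ⟪W i, x⟫) y))) ∧
    ∀ (W δ : Fin C → EuclideanSpace ℝ (Fin n)),
      (1 / 2) *
          fderiv ℝ (fderiv ℝ (fun W : Fin C → EuclideanSpace ℝ (Fin n) =>
            -Real.log (softmax (fun i => ⟪W i, x⟫) y))) W δ δ =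
        (1 / 4) * ∑ i, ∑ j,
          softmax (fun k => ⟪W k, x⟫) i * softmax (fun k => ⟪W k, x⟫) j *
            (⟪δ i, x⟫ - ⟪δ j, x⟫) ^ 2 :=
  linearModel_crossEntropy_second_derivative_general C n y x
end

section
/- Let C ≥ 1 and s : Fin C → ℝ, and let p = softmax(s). Define f : (Fin C → ℝ) → ℝ by f(ε) = KL(softmax(s) ‖ softmax(s + ε)). Then f is twice differentiable at 0, with f(0) = 0, first derivative Df(0) = 0, and for every ε the second derivative quadratic form satisfies D²f(0)[ε, ε] = ∑_i p_i (ε_i − ∑_j p_j ε_j)². Consequently the second-order Taylor expansion of f at 0 is (1/2) ∑_i p_i (ε_i − ε̄)² where ε̄ = ∑_j p_j ε_j. -/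
noncomputable def klPerturb {C : ℕ} (s : Fin C → ℝ) (ε : Fin C → ℝ) : ℝ :=
  ∑ i, softmax s i * Real.log (softmax s i / softmax (s + ε) i)

open ContinuousLinearMap

theorem Finset.sum_mul_sub_mul_eq_sum_mul_sub_sq {ι R : Type*} [CommRing R] (t : Finset ι)
    (w x : ι → R) (hw : ∑ i ∈ t, w i = 1) :
    ∑ i ∈ t, w i * (x i - ∑ j ∈ t, w j * x j) * x i =
      ∑ i ∈ t, w i * (x i - ∑ j ∈ t, w j * x j) ^ 2 := by
  set m := ∑ j ∈ t, w j * x j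
  have hcentered : ∑ i ∈ t, w i * (x i - m) * m = 0 := by
    simp only [mul_sub, sub_mul, Finset.sum_sub_distrib, ← Finset.sum_mul, hw, m]
    ring
  rw [← sub_eq_zero, ← hcentered, ← Finset.sum_sub_distrib]
  exact Finset.sum_congr rfl fun i _ => by ring

namespace Softmax

variable {C : ℕ}

noncomputable def logSumExp (x : Fin C → ℝ) : ℝ := Real.log (∑ k, Real.exp (x k))

noncomputable def mean (x : Fin C → ℝ) : (Fin C → ℝ) →L[ℝ] ℝ :=
  ∑ i, softmax x i • proj i

theorem mean_apply (x η : Fin C → ℝ) : mean x η = ∑ i, softmax x i * η i := by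
  simp [mean]

noncomputable def cov (x : Fin C → ℝ) : (Fin C → ℝ) →L[ℝ] (Fin C → ℝ) →L[ℝ] ℝ :=
  ∑ i, (softmax x i • (proj i - mean x)).smulRight (proj i)

theorem cov_apply (x η ε : Fin C → ℝ) :
    cov x η ε = ∑ i, softmax x i * (η i - mean x η) * ε i := by
  simp [cov, sum_apply]

theorem hasFDerivAt_sum_exp (x : Fin C → ℝ) :
    HasFDerivAt (fun x : Fin C → ℝ => ∑ k, Real.exp (x k))
      (∑ k, Real.exp (x k) • (proj k : (Fin C → ℝ) →L[ℝ] ℝ)) x :=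
  HasFDerivAt.fun_sum fun k _ => (hasFDerivAt_apply (𝕜 := ℝ) (F' := fun _ => ℝ) k x).exp

variable [NeZero C]

theorem sum_exp_pos (x : Fin C → ℝ) : 0 < ∑ k, Real.exp (x k) :=
  Finset.sum_pos (fun _ _ => Real.exp_pos _) Finset.univ_nonempty

theorem softmax_pos (x : Fin C → ℝ) (i : Fin C) : 0 < softmax x i :=
  div_pos (Real.exp_pos _) (sum_exp_pos x)

theorem sum_softmax (x : Fin C → ℝ) : ∑ i, softmax x i = 1 := by
  simp only [softmax]
  rw [← Finset.sum_div, div_self (sum_exp_pos x).ne']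

theorem log_softmax (x : Fin C → ℝ) (i : Fin C) :
    Real.log (softmax x i) = x i - logSumExp x := by
  rw [softmax, Real.log_div (Real.exp_ne_zero _) (sum_exp_pos x).ne', Real.log_exp, logSumExp]

theorem klPerturb_eq (s ε : Fin C → ℝ) :
    klPerturb s ε = logSumExp (s + ε) - logSumExp s - mean s ε := by
  have hlog : ∀ i, Real.log (softmax s i / softmax (s + ε) i) =
      (logSumExp (s + ε) - logSumExp s) - ε i := by
    intro i
    rw [Real.log_div (softmax_pos s i).ne' (softmax_pos (s + ε) i).ne', log_softmax,
      log_softmax, Pi.add_apply]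
    ring
  simp only [klPerturb, hlog, mul_sub, Finset.sum_sub_distrib, ← Finset.sum_mul, sum_softmax,
    one_mul, mean_apply]

theorem hasFDerivAt_logSumExp (x : Fin C → ℝ) : HasFDerivAt logSumExp (mean x) x := by
  refine ((hasFDerivAt_sum_exp x).log (sum_exp_pos x).ne').congr_fderiv
    (ContinuousLinearMap.ext fun η => ?_)
  simp [mean_apply, sum_apply, softmax, Finset.mul_sum, div_eq_inv_mul, mul_assoc]

theorem hasFDerivAt_softmax (x : Fin C → ℝ) (i : Fin C) :
    HasFDerivAt (fun x => softmax x i) (softmax x i • (proj i - mean x)) x := by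
  have hexp : ∀ x, softmax x i = Real.exp (x i - logSumExp x) := fun x => by
    rw [← log_softmax, Real.exp_log (softmax_pos x i)]
  simp only [hexp]
  exact ((hasFDerivAt_apply (𝕜 := ℝ) (F' := fun _ => ℝ) i x).fun_sub
    (hasFDerivAt_logSumExp x)).exp

theorem hasFDerivAt_mean (x : Fin C → ℝ) : HasFDerivAt mean (cov x) x :=
  HasFDerivAt.fun_sum fun i _ =>
    (hasFDerivAt_softmax x i).smul_const (proj i : (Fin C → ℝ) →L[ℝ] ℝ)

theorem hasFDerivAt_klPerturb (s ε : Fin C → ℝ) :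
    HasFDerivAt (klPerturb s) (mean (s + ε) - mean s) ε := by
  rw [funext (klPerturb_eq s)]
  have hshift := (hasFDerivAt_logSumExp (s + ε)).comp ε ((hasFDerivAt_id ε).const_add s)
  exact ((hshift.sub_const _).sub (mean s).hasFDerivAt).congr_fderiv (by simp)

theorem fderiv_klPerturb (s : Fin C → ℝ) :
    fderiv ℝ (klPerturb s) = fun ε => mean (s + ε) - mean s :=
  funext fun ε => (hasFDerivAt_klPerturb s ε).fderiv

theorem hasFDerivAt_fderiv_klPerturb (s ε : Fin C → ℝ) :
    HasFDerivAt (fderiv ℝ (klPerturb s)) (cov (s + ε)) ε := by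
  rw [fderiv_klPerturb]
  have hshift := (hasFDerivAt_mean (s + ε)).comp ε ((hasFDerivAt_id ε).const_add s)
  exact (hshift.sub_const _).congr_fderiv (by simp)

end Softmax

/-- `f(ε) = KL(softmax s ‖ softmax (s + ε))` is twice differentiable at `0`, with
`f 0 = 0`, vanishing first derivative at `0`, and second derivative quadratic form
`D²f(0)[ε, ε] = ∑ i, p i * (ε i - ∑ j, p j * ε j)^2` where `p = softmax s`; consequently
its second-order Taylor expansion at `0` is `(1/2) * ∑ i, p i * (ε i - ε̄)^2`. -/
theorem klPerturb_second_order_expansion (C : ℕ) (hC : 1 ≤ C) (s : Fin C → ℝ) :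
    DifferentiableAt ℝ (klPerturb s) 0 ∧
    DifferentiableAt ℝ (fderiv ℝ (klPerturb s)) 0 ∧
    klPerturb s 0 = 0 ∧
    fderiv ℝ (klPerturb s) 0 = 0 ∧
    ∀ ε : Fin C → ℝ,
      fderiv ℝ (fderiv ℝ (klPerturb s)) 0 ε ε =
        ∑ i, softmax s i * (ε i - ∑ j, softmax s j * ε j) ^ 2 := by
  have : NeZero C := ⟨by omega⟩
  have hD2 := Softmax.hasFDerivAt_fderiv_klPerturb s 0
  rw [add_zero] at hD2
  refine ⟨(Softmax.hasFDerivAt_klPerturb s 0).differentiableAt, hD2.differentiableAt,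
    ?_, ?_, fun ε => ?_⟩
  · simp [Softmax.klPerturb_eq]
  · simp [Softmax.fderiv_klPerturb]
  · rw [hD2.fderiv, Softmax.cov_apply, Softmax.mean_apply]
    exact Finset.sum_mul_sub_mul_eq_sum_mul_sub_sq _ _ _ (Softmax.sum_softmax s)
end
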